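/- arXiv:2506.23561 — 4 statements merged into one kernel-verified Lean document; each statement's English description precedes it below -/
import Mathlib

section
/- Let A be an NFA over alphabet {0,1}, unrolled to an acyclic automaton, let q be a state at level i, let w ∈ L(q) be a word of length i accepted at q, and let run(w,q) = q₀ → q₁ → ... → qᵢ (with q₀ the initial state and qᵢ = q) be its derivation run. For 0 ≤ ℓ ≤ i, let I(w,q,ℓ) be the set of words w' ∈ L(q) whose derivation run agrees with run(w,q) exactly up to the ℓ-th state (i.e. the last common prefix state of run(w,q) and run(w',q) is q_ℓ). Then |I(w,q,ℓ)| ≤ |L(q)| / |L(q_ℓ)|. -/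
/-- A nondeterministic finite automaton over the alphabet `{0,1}` (`Bool`), with a single
initial state, a transition relation, and (via `LinearOrder σ`) a total order `≺` on states. -/
structure UNFA (σ : Type*) where
  qI : σ
  trans : σ → Bool → σ → Prop

/-- `A.Accepts w q` : there is a run of the word `w` from the initial state ending at `q`.
`L(q) = {w | A.Accepts w q}`. -/
inductive UNFA.Accepts {σ : Type*} (A : UNFA σ) : List Bool → σ → Prop
  | nil : A.Accepts [] A.qI
  | snoc {w : List Bool} {b : Bool} {q' q : σ} :
      A.Accepts w q' → A.trans q' b q → A.Accepts (w ++ [b]) q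

/-- The `≺`-first `b`-predecessor of `q` whose language contains `w`
(junk value `qI` if there is none). -/
noncomputable def UNFA.firstPred {σ : Type*} [Fintype σ] [LinearOrder σ]
    (A : UNFA σ) (q : σ) (b : Bool) (w : List Bool) : σ := by
  classical
  exact if h : (Finset.univ.filter fun q' => A.trans q' b q ∧ A.Accepts w q').Nonempty
    then (Finset.univ.filter fun q' => A.trans q' b q ∧ A.Accepts w q').min' h
    else A.qI

/-- Derivation run computed on the reversed word, listed from `q` back to the initial
state. -/
noncomputable def UNFA.derivRunRev {σ : Type*} [Fintype σ] [LinearOrder σ]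
    (A : UNFA σ) : List Bool → σ → List σ
  | [], q => [q]
  | b :: rest, q => q :: A.derivRunRev rest (A.firstPred q b rest.reverse)

/-- The derivation run `run(w,q)` of `w ∈ L(q)`, as the list of its states from the
initial state (index 0) to `q` (index `w.length`). -/
noncomputable def UNFA.derivRun {σ : Type*} [Fintype σ] [LinearOrder σ]
    (A : UNFA σ) (w : List Bool) (q : σ) : List σ :=
  (A.derivRunRev w.reverse q).reverse

/-- The index `ℓ` of the last common prefix state of two runs `R, R'` (state lists) with
label words `w, w'`: the largest `k ≤ |w|` such that the runs agree on their first `k+1`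
states and the words agree on their first `k` symbols. -/
def lcpsLevel {σ : Type*} [DecidableEq σ] (R R' : List σ) (w w' : List Bool) : ℕ :=
  Nat.findGreatest
    (fun k => R.take (k+1) = R'.take (k+1) ∧ w.take k = w'.take k) w.length


set_option linter.unusedSectionVars false

section Aux

variable {σ : Type*} [Fintype σ] [LinearOrder σ] (A : UNFA σ)

lemma accepts_cases {v : List Bool} {q : σ} (h : A.Accepts v q) :
    (v = [] ∧ q = A.qI) ∨ ∃ u b q', v = u ++ [b] ∧ A.Accepts u q' ∧ A.trans q' b q := by
  cases h with
  | nil => exact Or.inl ⟨rfl, rfl⟩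
  | snoc h ht => exact Or.inr ⟨_, _, _, rfl, h, ht⟩

lemma accepts_nil {q : σ} (h : A.Accepts [] q) : q = A.qI := by
  rcases accepts_cases A h with ⟨_, rfl⟩ | ⟨u, b, q', huv, _, _⟩
  · rfl
  · simp at huv

lemma derivRun_nil (q : σ) : A.derivRun [] q = [q] := by
  simp [UNFA.derivRun, UNFA.derivRunRev]

lemma derivRun_snoc (w : List Bool) (b : Bool) (q : σ) :
    A.derivRun (w ++ [b]) q = A.derivRun w (A.firstPred q b w) ++ [q] := by
  simp [UNFA.derivRun, UNFA.derivRunRev]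

lemma derivRunRev_length : ∀ (v : List Bool) (q : σ), (A.derivRunRev v q).length = v.length + 1
  | [], q => rfl
  | b :: rest, q => by simp [UNFA.derivRunRev, derivRunRev_length rest]

lemma derivRun_length (w : List Bool) (q : σ) : (A.derivRun w q).length = w.length + 1 := by
  simp [UNFA.derivRun, derivRunRev_length]

lemma firstPred_spec {w : List Bool} {b : Bool} {q q' : σ}
    (h : A.Accepts w q') (ht : A.trans q' b q) :
    A.trans (A.firstPred q b w) b q ∧ A.Accepts w (A.firstPred q b w) := by
  classical
  have hne : (Finset.univ.filter fun q' => A.trans q' b q ∧ A.Accepts w q').Nonempty :=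
    ⟨q', by simp [ht, h]⟩
  have := Finset.min'_mem _ hne
  simp only [Finset.mem_filter] at this
  simp only [UNFA.firstPred, dif_pos hne]
  exact this.2

lemma runSpec : ∀ {w : List Bool} {q : σ}, A.Accepts w q → ∀ k ≤ w.length,
    A.Accepts (w.take k) ((A.derivRun w q).getD k A.qI) ∧
    ∀ u, A.Accepts u ((A.derivRun w q).getD k A.qI) → A.Accepts (u ++ w.drop k) q := by
  intro w
  induction w using List.reverseRecOn with
  | nil =>
    intro q hq k hk
    have hk0 : k = 0 := by simpa using hk
    subst hk0
    have := accepts_nil A hq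
    subst this
    constructor
    · simp only [derivRun_nil, List.take_nil, List.getD_cons_zero]
      exact UNFA.Accepts.nil
    · simp only [derivRun_nil, List.drop_nil, List.getD_cons_zero, List.append_nil]
      exact fun u hu => hu
  | append_singleton w' b ih =>
    intro q hq k hk
    rcases accepts_cases A hq with ⟨habs, _⟩ | ⟨u, c, q', huv, hu, ht⟩
    · simp at habs
    · obtain ⟨h1, h2⟩ := List.append_inj' huv rfl
      subst h1
      have hb : b = c := by simpa using h2
      subst hb
      set p := A.firstPred q b w' with hp
      obtain ⟨hpt, hpa⟩ := firstPred_spec A hu ht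
      rw [derivRun_snoc]
      rcases Nat.lt_or_ge k (w'.length + 1) with hk' | hk'
      · have hk'' : k ≤ w'.length := by omega
        have hklt : k < (A.derivRun w' p).length := by rw [derivRun_length]; omega
        rw [List.getD_append _ _ _ _ hklt]
        obtain ⟨h1, h2⟩ := ih hpa k hk''
        refine ⟨by simpa [List.take_append_of_le_length hk''] using h1, ?_⟩
        intro v hv
        have := (h2 v hv).snoc hpt
        rw [List.drop_append_of_le_length hk'']
        simpa [List.append_assoc] using this
      · have hk2 : k = w'.length + 1 := by simp at hk; omega
        subst hk2
        have hlenp := derivRun_length A w' p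
        have hgd : ((A.derivRun w' p) ++ [q]).getD (w'.length + 1) A.qI = q := by
          rw [List.getD_eq_getElem?_getD, List.getElem?_append_right (by omega)]
          simp [hlenp]
        rw [hgd]
        constructor
        · rw [List.take_of_length_le (by simp)]
          exact hq
        · intro v hv
          rw [List.drop_eq_nil_of_le (by simp)]
          simpa using hv

lemma accepts_length (lvl : σ → ℕ) (hlvl0 : lvl A.qI = 0)
    (hlvlstep : ∀ q' b q, A.trans q' b q → lvl q = lvl q' + 1) :
    ∀ {w : List Bool} {q : σ}, A.Accepts w q → w.length = lvl q := by
  intro w q h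
  induction h with
  | nil => simp [hlvl0]
  | snoc h ht ih => simp [hlvlstep _ _ _ ht, ih]

lemma take_one_getD' {α : Type*} (l : List α) (d : α) (h : 0 < l.length) :
    l.take 1 = [l.getD 0 d] := by
  cases l with
  | nil => simp at h
  | cons a t => simp

lemma derivRun_getD_zero {w : List Bool} {q : σ} (h : A.Accepts w q) :
    (A.derivRun w q).getD 0 A.qI = A.qI := by
  obtain ⟨h1, _⟩ := runSpec A h 0 (Nat.zero_le _)
  simpa using accepts_nil A (by simpa using h1)

lemma derivRun_take_one {w : List Bool} {q : σ} (h : A.Accepts w q) :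
    (A.derivRun w q).take 1 = [A.qI] := by
  rw [take_one_getD' _ A.qI (by rw [derivRun_length]; omega), derivRun_getD_zero A h]

end Aux

/-- In a (graded, i.e. unrolled) automaton, for `w ∈ L(q)` with `q` at level `i` and
`0 ≤ ℓ ≤ i`, the set `I(w,q,ℓ)` of words of `L(q)` whose derivation run diverges from
`run(w,q)` exactly at state `q_ℓ` satisfies `|I(w,q,ℓ)| ≤ |L(q)| / |L(q_ℓ)|`. -/
theorem stmt_1 {σ : Type*} [Fintype σ] [LinearOrder σ] (A : UNFA σ)
    (lvl : σ → ℕ) (hlvl0 : lvl A.qI = 0)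
    (hlvlstep : ∀ q' b q, A.trans q' b q → lvl q = lvl q' + 1)
    (q : σ) (i : ℕ) (hqi : lvl q = i)
    (w : List Bool) (hw : A.Accepts w q) (ℓ : ℕ) (hℓ : ℓ ≤ i) :
    (({w' | A.Accepts w' q ∧
          lcpsLevel (A.derivRun w q) (A.derivRun w' q) w w' = ℓ} : Set (List Bool)).ncard : ℝ)
      ≤ ({u | A.Accepts u q} : Set (List Bool)).ncard /
          ({u | A.Accepts u ((A.derivRun w q).getD ℓ A.qI)} : Set (List Bool)).ncard := by
  classical
  have hlen : w.length = i := (accepts_length A lvl hlvl0 hlvlstep hw).trans hqi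
  have hℓw : ℓ ≤ w.length := by omega
  set qℓ := (A.derivRun w q).getD ℓ A.qI with hqℓ
  obtain ⟨hAccℓ, hPath⟩ := runSpec A hw ℓ hℓw
  rw [← hqℓ] at hAccℓ hPath
  have hlvlℓ : lvl qℓ = ℓ := by
    have := accepts_length A lvl hlvl0 hlvlstep hAccℓ
    simpa [min_eq_left hℓw] using this.symm
  set Lq := ({u | A.Accepts u q} : Set (List Bool)) with hLq
  set Lℓ := ({u | A.Accepts u qℓ} : Set (List Bool)) with hLℓ
  set Iset := ({w' | A.Accepts w' q ∧
      lcpsLevel (A.derivRun w q) (A.derivRun w' q) w w' = ℓ} : Set (List Bool)) with hIset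
  have hfinL : Lq.Finite := by
    apply (List.finite_length_eq Bool i).subset
    intro u hu
    exact (accepts_length A lvl hlvl0 hlvlstep hu).trans hqi
  have hfinLℓ : Lℓ.Finite := by
    apply (List.finite_length_eq Bool ℓ).subset
    intro u hu
    exact (accepts_length A lvl hlvl0 hlvlstep hu).trans hlvlℓ
  have hfinI : Iset.Finite := hfinL.subset (fun x hx => hx.1)
  -- key extraction for members of Iset
  have key : ∀ w' ∈ Iset, (A.derivRun w' q).getD ℓ A.qI = qℓ ∧ w.take ℓ = w'.take ℓ := by
    intro w' hw'
    obtain ⟨hacc', hlcps⟩ := hw'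
    have hP0 : ((A.derivRun w q).take (0+1) = (A.derivRun w' q).take (0+1) ∧
        w.take 0 = w'.take 0) := by
      constructor
      · simpa using (derivRun_take_one A hw).trans (derivRun_take_one A hacc').symm
      · simp
    have hPℓ : (A.derivRun w q).take (ℓ+1) = (A.derivRun w' q).take (ℓ+1) ∧
        w.take ℓ = w'.take ℓ := by
      unfold lcpsLevel at hlcps
      rw [← hlcps]
      exact Nat.findGreatest_spec
        (P := fun k => (A.derivRun w q).take (k+1) = (A.derivRun w' q).take (k+1) ∧
          w.take k = w'.take k) (Nat.zero_le w.length) hP0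
    obtain ⟨htake, hwtake⟩ := hPℓ
    refine ⟨?_, hwtake⟩
    have h1 : (A.derivRun w' q)[ℓ]? = (A.derivRun w q)[ℓ]? := by
      have := congrArg (fun l => l[ℓ]?) htake
      simpa [List.getElem?_take, Nat.lt_succ_self] using this.symm
    simp [hqℓ, List.getD_eq_getElem?_getD, h1]
  -- injection
  have hmaps : ∀ p ∈ Lℓ ×ˢ Iset, p.1 ++ p.2.drop ℓ ∈ Lq := by
    rintro ⟨u, w'⟩ ⟨hu, hw'⟩
    have hu' : A.Accepts u qℓ := hu
    have hw'' : w' ∈ Iset := hw'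
    have hacc : A.Accepts w' q := hw''.1
    have hlen' : w'.length = i :=
      (accepts_length A lvl hlvl0 hlvlstep hacc).trans hqi
    obtain ⟨_, hPath'⟩ := runSpec A hacc ℓ (by omega)
    rw [(key w' hw'').1] at hPath'
    show A.Accepts (u ++ w'.drop ℓ) q
    exact hPath' u hu'
  have hinj : Set.InjOn (fun p : List Bool × List Bool => p.1 ++ p.2.drop ℓ) (Lℓ ×ˢ Iset) := by
    rintro ⟨u₁, w₁⟩ ⟨hu₁, hw₁⟩ ⟨u₂, w₂⟩ ⟨hu₂, hw₂⟩ heq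
    have hu₁' : A.Accepts u₁ qℓ := hu₁
    have hu₂' : A.Accepts u₂ qℓ := hu₂
    have hw₁' : w₁ ∈ Iset := hw₁
    have hw₂' : w₂ ∈ Iset := hw₂
    have heq' : u₁ ++ w₁.drop ℓ = u₂ ++ w₂.drop ℓ := heq
    have hu₁l : u₁.length = ℓ :=
      (accepts_length A lvl hlvl0 hlvlstep hu₁').trans hlvlℓ
    have hu₂l : u₂.length = ℓ :=
      (accepts_length A lvl hlvl0 hlvlstep hu₂').trans hlvlℓ
    obtain ⟨h1, h2⟩ := List.append_inj heq' (hu₁l.trans hu₂l.symm)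
    have hw12 : w₁ = w₂ := by
      rw [← List.take_append_drop ℓ w₁, ← List.take_append_drop ℓ w₂,
        ← (key w₁ hw₁').2, ← (key w₂ hw₂').2, h2]
    simp [h1, hw12]
  have hcard : Lℓ.ncard * Iset.ncard ≤ Lq.ncard := by
    have hprod : (Lℓ ×ˢ Iset).ncard = Lℓ.ncard * Iset.ncard := by
      rw [← Nat.card_coe_set_eq, ← Nat.card_coe_set_eq, ← Nat.card_coe_set_eq,
        Nat.card_congr (Equiv.Set.prod _ _), Nat.card_prod]
    rw [← hprod]
    exact Set.ncard_le_ncard_of_injOn _ hmaps hinj hfinL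
  have hpos : 0 < Lℓ.ncard := (Set.ncard_pos hfinLℓ).mpr ⟨w.take ℓ, hAccℓ⟩
  rw [le_div_iff₀ (by exact_mod_cast hpos)]
  exact_mod_cast (mul_comm Lℓ.ncard Iset.ncard) ▸ hcard
end

section
/- In the random process associated with countNFAcore*, for every state q of the unrolled automaton, every realizable history h for q, every admissible value t, every copy index r, and every word w ∈ L(q), the probability that w belongs to the random set Y^r_{h,t}(q) equals t. Moreover, if pred(q) = (q₁,...,q_k), then the probability that w belongs to Z^r_h(q) equals min(h(q₁),...,h(q_k)). -/
/-- `ρ_h(q) = min(h(q₁),...,h(q_k))` over the predecessors of `q`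
(junk value `1` if `q` has no predecessor). -/
noncomputable def UNFA.rhoH {σ : Type*} [Fintype σ] [LinearOrder σ]
    (A : UNFA σ) (h : σ → ℚ) (q : σ) : ℚ := by
  classical
  exact if hne : ((Finset.univ.filter fun q' => ∃ b, A.trans q' b q).image h).Nonempty
    then ((Finset.univ.filter fun q' => ∃ b, A.trans q' b q).image h).min' hne
    else 1

/-- Membership event `w.reverse ∈ Y^r_{h,t}(q)` of the random process, driven by the
independent uniform coins `U (q, w, c)` (`c = false` for the coin of the `reduce` inside
`Z`, `c = true` for the final `reduce` giving `Y`).  Defined by recursion on the reversed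
word. -/
noncomputable def UNFA.memYrev {σ Ω : Type*} [Fintype σ] [LinearOrder σ]
    (A : UNFA σ) (U : σ × List Bool × Bool → Ω → ℝ) (h : σ → ℚ) :
    List Bool → σ → ℚ → Ω → Prop
  | [], q, _t, _ω => q = A.qI
  | b :: rest, q, t, ω =>
      A.memYrev U h rest (A.firstPred q b rest.reverse) (h (A.firstPred q b rest.reverse)) ω ∧
      A.Accepts (b :: rest).reverse q ∧
      U (q, (b :: rest).reverse, false) ω ≤
        ((A.rhoH h q : ℝ) / ((h (A.firstPred q b rest.reverse) : ℝ))) ∧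
      U (q, (b :: rest).reverse, true) ω ≤ ((t : ℝ) / (A.rhoH h q : ℝ))

/-- Membership event `w.reverse ∈ Z^r_h(q)` of the random process. -/
noncomputable def UNFA.memZrev {σ Ω : Type*} [Fintype σ] [LinearOrder σ]
    (A : UNFA σ) (U : σ × List Bool × Bool → Ω → ℝ) (h : σ → ℚ) :
    List Bool → σ → Ω → Prop
  | [], _q, _ω => False
  | b :: rest, q, ω =>
      A.memYrev U h rest (A.firstPred q b rest.reverse) (h (A.firstPred q b rest.reverse)) ω ∧
      A.Accepts (b :: rest).reverse q ∧
      U (q, (b :: rest).reverse, false) ω ≤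
        ((A.rhoH h q : ℝ) / ((h (A.firstPred q b rest.reverse) : ℝ)))

/-- `w ∈ Y^r_{h,t}(q)`. -/
noncomputable def UNFA.memY {σ Ω : Type*} [Fintype σ] [LinearOrder σ]
    (A : UNFA σ) (U : σ × List Bool × Bool → Ω → ℝ) (h : σ → ℚ)
    (w : List Bool) (q : σ) (t : ℚ) (ω : Ω) : Prop :=
  A.memYrev U h w.reverse q t ω

/-- `w ∈ Z^r_h(q)`. -/
noncomputable def UNFA.memZ {σ Ω : Type*} [Fintype σ] [LinearOrder σ]
    (A : UNFA σ) (U : σ × List Bool × Bool → Ω → ℝ) (h : σ → ℚ)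
    (w : List Bool) (q : σ) (ω : Ω) : Prop :=
  A.memZrev U h w.reverse q ω

open MeasureTheory ProbabilityTheory

/-! The proof is an induction along the word. For `w·b ∈ L(q)` with `p` the `≺`-first
`b`-predecessor of `q` accepting `w`, the event `w·b ∈ Z_h(q)` is the event
`w ∈ Y_{h,h(p)}(p)` intersected with a fresh coin of bias `ρ_h(q)/h(p)`, and the event
`w·b ∈ Y_{h,t}(q)` is that intersected with a further fresh coin of bias `t/ρ_h(q)`. The event
for `w` only depends on coins indexed by words of length at most `|w|`, so the three events are
independent and the probabilities multiply: `h(p) · ρ_h(q)/h(p) = ρ_h(q)` and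
`ρ_h(q) · t/ρ_h(q) = t`. The levels guarantee that `q_I` is never re-entered, so the
induction hypothesis is only needed at states other than `q_I`, where `h(p) ≤ ρ_h(p)`. -/

namespace UNFA

section Automaton

variable {σ : Type*} (A : UNFA σ)

lemma eq_qI_of_accepts_nil {q : σ} (hacc : A.Accepts [] q) : q = A.qI := by
  generalize hv : ([] : List Bool) = v at hacc
  cases hacc with
  | nil => rfl
  | snoc => simp at hv

lemma exists_trans_of_accepts_append_singleton {w : List Bool} {b : Bool} {q : σ}
    (hacc : A.Accepts (w ++ [b]) q) : ∃ q', A.trans q' b q ∧ A.Accepts w q' := by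
  generalize hv : w ++ [b] = v at hacc
  cases hacc with
  | nil => simp at hv
  | snoc hw ht =>
      obtain ⟨rfl, rfl⟩ := List.append_inj' hv rfl |>.imp_right List.singleton_inj.mp
      exact ⟨_, ht, hw⟩

lemma lvl_eq_length_of_accepts {lvl : σ → ℕ} (hlvl0 : lvl A.qI = 0)
    (hlvlstep : ∀ q' b q, A.trans q' b q → lvl q = lvl q' + 1) {w : List Bool} {q : σ}
    (hacc : A.Accepts w q) : lvl q = w.length := by
  induction hacc with
  | nil => exact hlvl0
  | snoc _ ht ih => simp [hlvlstep _ _ _ ht, ih]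

lemma eq_nil_of_accepts_qI {lvl : σ → ℕ} (hlvl0 : lvl A.qI = 0)
    (hlvlstep : ∀ q' b q, A.trans q' b q → lvl q = lvl q' + 1) {w : List Bool}
    (hacc : A.Accepts w A.qI) : w = [] := by
  simpa [hlvl0, eq_comm] using A.lvl_eq_length_of_accepts hlvl0 hlvlstep hacc

variable [Fintype σ] [LinearOrder σ]

lemma firstPred_spec {w : List Bool} {b : Bool} {q : σ} (hacc : A.Accepts (w ++ [b]) q) :
    A.trans (A.firstPred q b w) b q ∧ A.Accepts w (A.firstPred q b w) := by
  classical
  obtain ⟨q', ht, hw⟩ := A.exists_trans_of_accepts_append_singleton hacc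
  rw [firstPred]
  split_ifs with hne
  · simpa using Finset.min'_mem _ hne
  · exact absurd ⟨q', by simp [ht, hw]⟩ hne

lemma rhoH_pos {h : σ → ℚ} (hpos : ∀ q, 0 < h q) (q : σ) : 0 < A.rhoH h q := by
  classical
  rw [rhoH]
  split_ifs with hne
  · obtain ⟨q', -, hq'⟩ := Finset.mem_image.mp (Finset.min'_mem _ hne)
    exact hq' ▸ hpos q'
  · exact one_pos

lemma rhoH_le_of_trans (h : σ → ℚ) {p q : σ} {b : Bool} (ht : A.trans p b q) :
    A.rhoH h q ≤ h p := by
  classical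
  have hmem : h p ∈ (Finset.univ.filter fun q' => ∃ b, A.trans q' b q).image h :=
    Finset.mem_image_of_mem h (Finset.mem_filter.mpr ⟨Finset.mem_univ _, b, ht⟩)
  rw [rhoH]
  split_ifs with hne
  · exact Finset.min'_le _ _ hmem
  · exact absurd ⟨_, hmem⟩ hne

end Automaton

end UNFA

section Coins

open MeasureTheory ProbabilityTheory

variable {ι Ω β : Type*} [MeasurableSpace β]

abbrev coinSigma (U : ι → Ω → β) (S : Set ι) : MeasurableSpace Ω :=
  ⨆ i ∈ S, MeasurableSpace.comap (U i) inferInstance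

lemma coinSigma_mono (U : ι → Ω → β) {S T : Set ι} (hST : S ⊆ T) :
    coinSigma U S ≤ coinSigma U T :=
  biSup_mono hST

lemma measurableSet_coinSigma_le (U : ι → Ω → ℝ) {S : Set ι} {i : ι} (hi : i ∈ S) (c : ℝ) :
    MeasurableSet[coinSigma U S] {ω | U i ω ≤ c} :=
  le_iSup₂ (f := fun j (_ : j ∈ S) => MeasurableSpace.comap (U j) inferInstance) i hi _
    ⟨Set.Iic c, measurableSet_Iic, rfl⟩

lemma ProbabilityTheory.iIndepFun.measure_inter_of_disjoint [MeasurableSpace Ω]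
    {μ : Measure Ω} {U : ι → Ω → β} (hU : iIndepFun U μ) (hUm : ∀ i, Measurable (U i))
    {S T : Set ι} (hST : Disjoint S T)
    {E F : Set Ω} (hE : MeasurableSet[coinSigma U S] E) (hF : MeasurableSet[coinSigma U T] F) :
    μ (E ∩ F) = μ E * μ F :=
  (Indep_iff _ _ _).mp (indep_iSup_of_disjoint (fun i => (hUm i).comap_le) hU.iIndep hST)
    E F hE hF

end Coins

namespace UNFA

open MeasureTheory ProbabilityTheory

variable {σ Ω : Type*} [Fintype σ] [LinearOrder σ] (A : UNFA σ)
  (U : σ × List Bool × Bool → Ω → ℝ) (h : σ → ℚ)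

lemma setOf_memZrev_cons {b : Bool} {rest : List Bool} {q : σ}
    (hacc : A.Accepts (rest.reverse ++ [b]) q) :
    {ω | A.memZrev U h (b :: rest) q ω} =
      {ω | A.memYrev U h rest (A.firstPred q b rest.reverse)
          (h (A.firstPred q b rest.reverse)) ω} ∩
        {ω | U (q, (b :: rest).reverse, false) ω ≤
          (A.rhoH h q : ℝ) / (h (A.firstPred q b rest.reverse) : ℝ)} := by
  ext ω
  simp [memZrev, hacc]

lemma setOf_memYrev_cons (b : Bool) (rest : List Bool) (q : σ) (t : ℚ) :
    {ω | A.memYrev U h (b :: rest) q t ω} =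
      {ω | A.memZrev U h (b :: rest) q ω} ∩
        {ω | U (q, (b :: rest).reverse, true) ω ≤ (t : ℝ) / (A.rhoH h q : ℝ)} := by
  ext ω
  simp [memYrev, memZrev, and_assoc]

lemma measurableSet_memYrev (v : List Bool) (q : σ) (t : ℚ) :
    MeasurableSet[coinSigma U {i | i.2.1.length ≤ v.length}] {ω | A.memYrev U h v q t ω} := by
  induction v generalizing q t with
  | nil => exact MeasurableSet.const _
  | cons b rest ih =>
      have hmono := coinSigma_mono U (S := {i | i.2.1.length ≤ rest.length})
        (T := {i | i.2.1.length ≤ (b :: rest).length}) fun i hi => by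
          simp only [Set.mem_ofPred_eq, List.length_cons] at hi ⊢
          omega
      simp only [memYrev, Set.ofPred_and]
      exact (hmono _ (ih _ _)).inter <| (MeasurableSet.const _).inter <|
        (measurableSet_coinSigma_le U (by simp) _).inter (measurableSet_coinSigma_le U (by simp) _)

lemma measurableSet_memZrev_cons (b : Bool) (rest : List Bool) (q : σ) :
    MeasurableSet[coinSigma U (insert (q, (b :: rest).reverse, false)
      {i | i.2.1.length ≤ rest.length})] {ω | A.memZrev U h (b :: rest) q ω} := by
  simp only [memZrev, Set.ofPred_and]
  exact (coinSigma_mono U (Set.subset_insert _ _) _ (A.measurableSet_memYrev U h _ _ _)).inter <|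
    (MeasurableSet.const _).inter (measurableSet_coinSigma_le U (Set.mem_insert _ _) _)

variable [MeasurableSpace Ω]

lemma measure_memZrev_cons {μ : Measure Ω} (hUm : ∀ i, Measurable (U i))
    (hUindep : iIndepFun U μ)
    (hUunif : ∀ i c, 0 ≤ c → c ≤ 1 → μ {ω | U i ω ≤ c} = ENNReal.ofReal c)
    (hpos : ∀ q', 0 < h q') {b : Bool} {rest : List Bool} {q : σ}
    (hacc : A.Accepts (rest.reverse ++ [b]) q)
    (hY : μ {ω | A.memYrev U h rest (A.firstPred q b rest.reverse)
        (h (A.firstPred q b rest.reverse)) ω} =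
      ENNReal.ofReal (h (A.firstPred q b rest.reverse) : ℝ)) :
    μ {ω | A.memZrev U h (b :: rest) q ω} = ENNReal.ofReal (A.rhoH h q : ℝ) := by
  set p := A.firstPred q b rest.reverse
  have hp : (0 : ℝ) < h p := by exact_mod_cast hpos p
  have hρ : (0 : ℝ) < A.rhoH h q := by exact_mod_cast A.rhoH_pos hpos q
  have hρp : (A.rhoH h q : ℝ) ≤ h p := by
    exact_mod_cast A.rhoH_le_of_trans h (A.firstPred_spec hacc).1
  have hdisj : Disjoint {i : σ × List Bool × Bool | i.2.1.length ≤ rest.length}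
      {(q, (b :: rest).reverse, false)} := by
    simp
  rw [A.setOf_memZrev_cons U h hacc,
    hUindep.measure_inter_of_disjoint hUm hdisj (A.measurableSet_memYrev U h _ _ _)
      (measurableSet_coinSigma_le U (Set.mem_singleton _) _),
    hY, hUunif _ _ (by positivity) ((div_le_one hp).mpr hρp), ← ENNReal.ofReal_mul hp.le]
  congr 1
  field_simp

lemma measure_memYrev {μ : Measure Ω} [IsProbabilityMeasure μ]
    {lvl : σ → ℕ} (hlvl0 : lvl A.qI = 0)
    (hlvlstep : ∀ q' b q, A.trans q' b q → lvl q = lvl q' + 1)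
    (hUm : ∀ i, Measurable (U i)) (hUindep : iIndepFun U μ)
    (hUunif : ∀ i c, 0 ≤ c → c ≤ 1 → μ {ω | U i ω ≤ c} = ENNReal.ofReal c)
    (hpos : ∀ q', 0 < h q') (hI : h A.qI = 1) (hle : ∀ q', q' ≠ A.qI → h q' ≤ A.rhoH h q')
    (v : List Bool) (q : σ) (t : ℚ) (ht0 : 0 < t) (htle : q ≠ A.qI → t ≤ A.rhoH h q)
    (htI : q = A.qI → t = 1) (hacc : A.Accepts v.reverse q) :
    μ {ω | A.memYrev U h v q t ω} = ENNReal.ofReal (t : ℝ) := by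
  induction v generalizing q t with
  | nil =>
      have hq : q = A.qI := A.eq_qI_of_accepts_nil hacc
      have hset : {ω | A.memYrev U h [] q t ω} = Set.univ := by
        ext ω
        simp [memYrev, hq]
      rw [hset, measure_univ, htI hq, ENNReal.ofReal_one.symm, Rat.cast_one]
  | cons b rest ih =>
      have hq : q ≠ A.qI := by
        rintro rfl
        simpa using A.eq_nil_of_accepts_qI hlvl0 hlvlstep hacc
      rw [List.reverse_cons] at hacc
      set p := A.firstPred q b rest.reverse
      have hZ := A.measure_memZrev_cons U h hUm hUindep hUunif hpos hacc
        (ih p (h p) (hpos p) (hle p) (fun hpI => hpI ▸ hI) (A.firstPred_spec hacc).2)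
      have hρ : (0 : ℝ) < A.rhoH h q := by exact_mod_cast A.rhoH_pos hpos q
      have htρ : (t : ℝ) ≤ A.rhoH h q := by exact_mod_cast htle hq
      have hdisj : Disjoint (insert (q, (b :: rest).reverse, false)
          {i : σ × List Bool × Bool | i.2.1.length ≤ rest.length})
          {(q, (b :: rest).reverse, true)} := by
        simp
      rw [A.setOf_memYrev_cons, hUindep.measure_inter_of_disjoint hUm hdisj
          (A.measurableSet_memZrev_cons U h b rest q)
          (measurableSet_coinSigma_le U (Set.mem_singleton _) _),
        hZ, hUunif _ _ (by positivity) ((div_le_one hρ).mpr htρ), ← ENNReal.ofReal_mul hρ.le]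
      congr 1
      field_simp

end UNFA

open MeasureTheory ProbabilityTheory

/-- First-order probabilities in the random process: with independent uniform coins and a
realizable history `h` (positive values, `h(q_I) = 1`, `h(q') ≤ ρ_h(q')`), for every
admissible `t` (with `0 < t ≤ ρ_h(q)`, and `t = 1` at `q_I`) and every `w ∈ L(q)`,
`Pr[w ∈ Y^r_{h,t}(q)] = t`; moreover for `q ≠ q_I`,
`Pr[w ∈ Z^r_h(q)] = min(h(q₁),...,h(q_k)) = ρ_h(q)`. -/
theorem stmt_3 {σ Ω : Type*} [Fintype σ] [LinearOrder σ] [MeasurableSpace Ω]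
    (μ : Measure Ω) [IsProbabilityMeasure μ] (A : UNFA σ)
    (lvl : σ → ℕ) (hlvl0 : lvl A.qI = 0)
    (hlvlstep : ∀ q' b q, A.trans q' b q → lvl q = lvl q' + 1)
    (U : σ × List Bool × Bool → Ω → ℝ)
    (hUm : ∀ i, Measurable (U i))
    (hUindep : iIndepFun U μ)
    (hUunif : ∀ i c, 0 ≤ c → c ≤ 1 → μ {ω | U i ω ≤ c} = ENNReal.ofReal c)
    (h : σ → ℚ) (hpos : ∀ q', 0 < h q') (hI : h A.qI = 1)
    (hle : ∀ q', q' ≠ A.qI → h q' ≤ A.rhoH h q')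
    (q : σ) (t : ℚ) (ht0 : 0 < t) (htle : t ≤ A.rhoH h q) (htI : q = A.qI → t = 1) :
    (∀ w : List Bool, A.Accepts w q →
        μ {ω | A.memY U h w q t ω} = ENNReal.ofReal (t : ℝ)) ∧
    (q ≠ A.qI → ∀ w : List Bool, A.Accepts w q →
        μ {ω | A.memZ U h w q ω} = ENNReal.ofReal ((A.rhoH h q : ℝ))) := by
  have hY := A.measure_memYrev U h hlvl0 hlvlstep hUm hUindep hUunif hpos hI hle
  refine ⟨fun w hacc => hY w.reverse q t ht0 (fun _ => htle) htI (by simpa using hacc),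
    fun hq w hacc => ?_⟩
  obtain ⟨b, rest, hw⟩ : ∃ b rest, w.reverse = b :: rest :=
    List.exists_cons_of_ne_nil <| List.reverse_ne_nil_iff.mpr
      fun hnil => hq (A.eq_qI_of_accepts_nil (hnil ▸ hacc))
  have hacc' : A.Accepts (rest.reverse ++ [b]) q := by
    simpa [← List.reverse_cons, ← hw] using hacc
  have hp := (A.firstPred_spec hacc').2
  simp only [UNFA.memZ, hw]
  exact A.measure_memZrev_cons U h hUm hUindep hUunif hpos hacc'
    (hY rest _ _ (hpos _) (hle _) (fun hpI => hpI ▸ hI) (by simpa using hp))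
end

section
/- Let Z be a random subset of a finite set L of words, with the property that Pr[w ∈ Z] = ρ for all w ∈ L, and Pr[w ∈ Z, w' ∈ Z] ≤ ρ²/t*(w,w') for distinct w,w', where t*(w,w') ≥ (1−κ)/|L(q_ℓ)| whenever the last common prefix state of the derivation runs of w and w' is q_ℓ, and where for each w and each level ℓ the number of w' diverging from w at q_ℓ is at most |L|/|L(q_ℓ)|, with runs of length at most n. Then Var[|Z|] ≤ ρ|L| + (ρ|L|)² · n / (1−κ). -/
/-!
Bound the variance by the second moment `∑_{w,w'} Pr[w ∈ Z, w' ∈ Z]`. The diagonal contributes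
`ρ` per word. Off the diagonal, a pair diverging at level `ℓ` contributes at most
`ρ² |L(q_ℓ)| / (1 - κ)`, while at most `|L| / |L(q_ℓ)|` words diverge from a given `w` at level
`ℓ`: the factors `|L(q_ℓ)|` cancel, so each of the `n` levels contributes at most
`ρ² |L| / (1 - κ)` to the row of `w`.
-/

open MeasureTheory ProbabilityTheory Finset

theorem integral_sq_sum_indicator {Ω ι : Type*} [MeasurableSpace Ω] (μ : Measure Ω)
    [IsFiniteMeasure μ] (s : Finset ι) {E : ι → Set Ω} (hE : ∀ i, MeasurableSet (E i)) :
    ∫ ω, (∑ i ∈ s, (E i).indicator (fun _ => (1 : ℝ)) ω) ^ 2 ∂μ =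
      ∑ i ∈ s, ∑ j ∈ s, μ.real (E i ∩ E j) := by
  have hint : ∀ i j, Integrable ((E i ∩ E j).indicator (fun _ => (1 : ℝ))) μ := fun i j =>
    (integrable_const 1).indicator ((hE i).inter (hE j))
  simp_rw [sq, sum_mul_sum, ← Set.inter_indicator_mul, mul_one]
  rw [integral_finsetSum _ fun i _ => integrable_finsetSum _ fun j _ => hint i j]
  refine sum_congr rfl fun i _ => ?_
  rw [integral_finsetSum _ fun j _ => hint i j]
  exact sum_congr rfl fun j _ => integral_indicator_one ((hE i).inter (hE j))

theorem variance_sum_indicator_le {Ω ι : Type*} [MeasurableSpace Ω] (μ : Measure Ω)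
    [IsProbabilityMeasure μ] (s : Finset ι) {E : ι → Set Ω} (hE : ∀ i, MeasurableSet (E i)) :
    variance (fun ω => ∑ i ∈ s, (E i).indicator (fun _ => (1 : ℝ)) ω) μ ≤
      ∑ i ∈ s, ∑ j ∈ s, μ.real (E i ∩ E j) := by
  have hmeas : AEStronglyMeasurable (fun ω => ∑ i ∈ s, (E i).indicator (fun _ => (1 : ℝ)) ω) μ :=
    (Finset.measurable_sum s fun i _ => measurable_const.indicator (hE i)).aestronglyMeasurable
  exact (variance_le_expectation_sq hmeas).trans_eq (integral_sq_sum_indicator μ s hE)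

theorem Finset.sum_le_of_card_fiber_le {β : Type*} {s : Finset β} {g : β → ℕ} {n : ℕ}
    {f : β → ℝ} {c : ℕ → ℝ} {a B : ℝ} (ha : 0 ≤ a) (hc : ∀ ℓ, 0 < c ℓ)
    (hg : ∀ x ∈ s, g x < n) (hf : ∀ x ∈ s, f x ≤ a * c (g x))
    (hcard : ∀ ℓ < n, (#(s.filter fun x => g x = ℓ) : ℝ) ≤ B / c ℓ) :
    ∑ x ∈ s, f x ≤ n * (a * B) := by
  have hmaps : ∀ x ∈ s, g x ∈ range n := fun x hx => mem_range.2 (hg x hx)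
  calc ∑ x ∈ s, f x
      ≤ ∑ x ∈ s, a * c (g x) := sum_le_sum hf
    _ = ∑ ℓ ∈ range n, #(s.filter fun x => g x = ℓ) * (a * c ℓ) := by
      rw [← sum_fiberwise_of_maps_to hmaps]
      refine sum_congr rfl fun ℓ _ => ?_
      rw [sum_congr rfl fun x hx => by rw [(mem_filter.1 hx).2], sum_const, nsmul_eq_mul]
    _ ≤ ∑ ℓ ∈ range n, B / c ℓ * (a * c ℓ) :=
      sum_le_sum fun ℓ hℓ =>
        mul_le_mul_of_nonneg_right (hcard ℓ (mem_range.1 hℓ)) (mul_nonneg ha (hc ℓ).le)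
    _ = n * (a * B) := by
      have hcancel : ∀ ℓ, B / c ℓ * (a * c ℓ) = a * B := fun ℓ => by
        field_simp [(hc ℓ).ne']
      simp only [hcancel, sum_const, card_range, nsmul_eq_mul]

theorem ENNReal.toReal_le_div_mul_of_le_ofReal_div {p : ENNReal} {a t c q : ℝ}
    (hp : p ≤ ENNReal.ofReal (a / t)) (ha : 0 ≤ a) (hc : 0 < c) (hq : 0 < q) (ht : c / q ≤ t) :
    p.toReal ≤ a / c * q := by
  have ht0 : 0 < t := (div_pos hc hq).trans_le ht
  calc p.toReal ≤ a / t := ENNReal.toReal_le_of_le_ofReal (div_nonneg ha ht0.le) hp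
    _ ≤ a / (c / q) := div_le_div_of_nonneg_left ha (div_pos hc hq) ht
    _ = a / c * q := by rw [div_div_eq_mul_div, mul_div_right_comm]

theorem stmt_5_general {Ω α : Type*} [MeasurableSpace Ω] [DecidableEq α]
    (μ : Measure Ω) [IsProbabilityMeasure μ]
    (L : Finset α) (n : ℕ)
    (κ ρ : ℝ) (hκ : κ ∈ Set.Ioo (0:ℝ) 1) (hρ0 : 0 ≤ ρ)
    (E : α → Set Ω) (hEm : ∀ w, MeasurableSet (E w))
    (hfirst : ∀ w ∈ L, μ (E w) = ENNReal.ofReal ρ)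
    (div : α → α → ℕ) (hdiv : ∀ w ∈ L, ∀ w' ∈ L, w ≠ w' → div w w' < n)
    (Lq : α → ℕ → ℝ) (hLq : ∀ w ℓ, 0 < Lq w ℓ)
    (tstar : α → α → ℝ)
    (htstar : ∀ w ∈ L, ∀ w' ∈ L, w ≠ w' → (1 - κ)/(Lq w (div w w')) ≤ tstar w w')
    (hsecond : ∀ w ∈ L, ∀ w' ∈ L, w ≠ w' →
        μ (E w ∩ E w') ≤ ENNReal.ofReal (ρ^2 / tstar w w'))
    (hclass : ∀ w ∈ L, ∀ ℓ < n,
        ((L.filter (fun w' => w' ≠ w ∧ div w w' = ℓ)).card : ℝ) ≤ (L.card : ℝ)/(Lq w ℓ)) :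
    variance (fun ω => ∑ w ∈ L, (E w).indicator (fun _ => (1:ℝ)) ω) μ ≤
      ρ * L.card + (ρ * L.card)^2 * n / (1 - κ) := by
  have h1κ : 0 < 1 - κ := sub_pos.2 hκ.2
  have hrow : ∀ w ∈ L, ∑ w' ∈ L, μ.real (E w ∩ E w') ≤ ρ + n * (ρ ^ 2 / (1 - κ) * #L) := by
    intro w hw
    rw [← add_sum_erase _ _ hw, Set.inter_self, measureReal_def, hfirst w hw,
      ENNReal.toReal_ofReal hρ0]
    refine add_le_add_right (sum_le_of_card_fiber_le (by positivity) (hLq w)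
      (fun w' hw' => hdiv w hw w' (mem_of_mem_erase hw') (ne_of_mem_erase hw').symm)
      (fun w' hw' => ?_) fun ℓ hℓ => ?_) ρ
    · have hw'L := mem_of_mem_erase hw'
      have hne := (ne_of_mem_erase hw').symm
      exact ENNReal.toReal_le_div_mul_of_le_ofReal_div (hsecond w hw w' hw'L hne) (sq_nonneg ρ)
        h1κ (hLq w _) (htstar w hw w' hw'L hne)
    · convert hclass w hw ℓ hℓ using 3
      ext w'
      simp only [mem_filter, mem_erase]
      tauto
  calc variance (fun ω => ∑ w ∈ L, (E w).indicator (fun _ => (1:ℝ)) ω) μ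
      ≤ ∑ w ∈ L, ∑ w' ∈ L, μ.real (E w ∩ E w') := variance_sum_indicator_le μ L hEm
    _ ≤ ∑ _w ∈ L, (ρ + n * (ρ ^ 2 / (1 - κ) * #L)) := sum_le_sum hrow
    _ = ρ * L.card + (ρ * L.card)^2 * n / (1 - κ) := by
      rw [sum_const, nsmul_eq_mul]
      ring

/-- Variance bound for the size of a random subset `Z` of a finite set `L`:
`Pr[w ∈ Z] = ρ` for each `w`, pairwise probabilities are bounded by `ρ²/t*(w,w')`,
`t*(w,w') ≥ (1-κ)/|L(q_ℓ)|` where `ℓ = div w w'` is the divergence level, and the number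
of `w'` diverging from `w` at level `ℓ` is at most `|L|/|L(q_ℓ)|`. Then
`Var[|Z|] ≤ ρ|L| + (ρ|L|)² n/(1-κ)`. -/
theorem stmt_5 {Ω α : Type*} [MeasurableSpace Ω] [DecidableEq α]
    (μ : Measure Ω) [IsProbabilityMeasure μ]
    (L : Finset α) (n : ℕ) (hn : 1 ≤ n)
    (κ ρ : ℝ) (hκ : κ ∈ Set.Ioo (0:ℝ) 1) (hρ0 : 0 ≤ ρ) (hρ1 : ρ ≤ 1)
    (E : α → Set Ω) (hEm : ∀ w, MeasurableSet (E w))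
    (hfirst : ∀ w ∈ L, μ (E w) = ENNReal.ofReal ρ)
    (div : α → α → ℕ) (hdiv : ∀ w ∈ L, ∀ w' ∈ L, w ≠ w' → div w w' < n)
    (Lq : α → ℕ → ℝ) (hLq : ∀ w ℓ, 0 < Lq w ℓ)
    (tstar : α → α → ℝ)
    (htstar : ∀ w ∈ L, ∀ w' ∈ L, w ≠ w' → (1 - κ)/(Lq w (div w w')) ≤ tstar w w')
    (hsecond : ∀ w ∈ L, ∀ w' ∈ L, w ≠ w' →
        μ (E w ∩ E w') ≤ ENNReal.ofReal (ρ^2 / tstar w w'))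
    (hclass : ∀ w ∈ L, ∀ ℓ < n,
        ((L.filter (fun w' => w' ≠ w ∧ div w w' = ℓ)).card : ℝ) ≤ (L.card : ℝ)/(Lq w ℓ)) :
    variance (fun ω => ∑ w ∈ L, (E w).indicator (fun _ => (1:ℝ)) ω) μ ≤
      ρ * L.card + (ρ * L.card)^2 * n / (1 - κ) :=
  stmt_5_general μ L n κ ρ hκ hρ0 E hEm hfirst div hdiv Lq hLq tstar htstar hsecond hclass
end

section
/- In the unrolled automaton, for every state q ≠ q_I and every word w ∈ L(q), the derivation run run(w,q) is well-defined and unique, i.e., writing w = w'·b, there exists a unique ≺-first b-predecessor q' of q with w' ∈ L(q'), and run(w,q) is an accepting run of w ending at q. -/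
/-- `IsRun A w R q`: the state list `R` is an accepting run of `w` from the initial state
ending at `q`. -/
def UNFA.IsRun {σ : Type*} [Inhabited σ] (A : UNFA σ) (w : List Bool) (R : List σ)
    (q : σ) : Prop :=
  R.length = w.length + 1 ∧ R.getD 0 default = A.qI ∧ R.getD w.length default = q ∧
  ∀ i < w.length, A.trans (R.getD i default) (w.getD i true) (R.getD (i+1) default)


lemma accepts_inv {σ : Type*} (A : UNFA σ) {v : List Bool} {q : σ}
    (h : A.Accepts v q) : ∀ w b, v = w ++ [b] → ∃ p, A.trans p b q ∧ A.Accepts w p := by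
  cases h with
  | nil => intro w b hw; simp at hw
  | snoc h1 h2 =>
    intro w b hw
    rename_i w0 b0 p
    obtain ⟨rfl, hb⟩ := List.append_inj' hw rfl
    obtain rfl : b0 = b := by simpa using hb
    exact ⟨p, h2, h1⟩

lemma accepts_nil_inv {σ : Type*} (A : UNFA σ) {v : List Bool} {q : σ}
    (h : A.Accepts v q) : v = [] → q = A.qI := by
  cases h with
  | nil => intro _; rfl
  | snoc => intro hv; simp at hv

lemma firstPred_spec_s12 {σ : Type*} [Fintype σ] [LinearOrder σ] (A : UNFA σ)
    {q p0 : σ} {b : Bool} {w : List Bool} (h0 : A.trans p0 b q) (ha : A.Accepts w p0) :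
    (A.trans (A.firstPred q b w) b q ∧ A.Accepts w (A.firstPred q b w)) ∧
    ∀ p', A.trans p' b q → A.Accepts w p' → A.firstPred q b w ≤ p' := by
  classical
  have hne : (Finset.univ.filter fun q' => A.trans q' b q ∧ A.Accepts w q').Nonempty :=
    ⟨p0, by simp [h0, ha]⟩
  have hfp : A.firstPred q b w =
      (Finset.univ.filter fun q' => A.trans q' b q ∧ A.Accepts w q').min' hne := by
    simp only [UNFA.firstPred, dif_pos hne]
  constructor
  · have := Finset.min'_mem _ hne
    rw [Finset.mem_filter] at this
    rw [hfp]; exact this.2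
  · intro p' h1 h2
    rw [hfp]
    exact Finset.min'_le _ _ (by simp [h1, h2])

lemma isRun_snoc {σ : Type*} [Inhabited σ] (A : UNFA σ) {w : List Bool} {b : Bool}
    {R : List σ} {p q : σ} (hR : A.IsRun w R p) (ht : A.trans p b q) :
    A.IsRun (w ++ [b]) (R ++ [q]) q := by
  obtain ⟨hlen, h0, hend, hstep⟩ := hR
  have hlw : w.length < R.length := by omega
  refine ⟨by simp [hlen], ?_, ?_, ?_⟩
  · rw [List.getD_append _ _ _ _ (by omega)]; exact h0
  · rw [List.length_append, List.length_singleton,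
      List.getD_append_right _ _ _ _ (by omega)]
    simp [hlen]
  · intro i hi
    rw [List.length_append, List.length_singleton] at hi
    rcases Nat.lt_or_ge i w.length with hiw | hiw
    · rw [List.getD_append _ _ _ _ (by omega), List.getD_append _ _ _ _ (by omega),
        List.getD_append _ _ _ _ (by omega)]
      exact hstep i hiw
    · have : i = w.length := by omega
      subst this
      rw [List.getD_append _ _ _ _ (by omega),
        List.getD_append_right _ _ _ _ (by omega),
        List.getD_append_right _ _ _ _ (by omega)]
      rw [hend]
      simpa [hlen] using ht

lemma isRun_derivRun {σ : Type*} [Fintype σ] [LinearOrder σ] [Inhabited σ] (A : UNFA σ) :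
    ∀ (w : List Bool) (q : σ), A.Accepts w q → A.IsRun w (A.derivRun w q) q := by
  intro w
  induction w using List.reverseRecOn with
  | nil =>
    intro q hq
    obtain rfl := accepts_nil_inv A hq rfl
    exact ⟨rfl, rfl, rfl, by simp⟩
  | append_singleton w' b ih =>
    intro q hq
    obtain ⟨p0, hp0t, hp0a⟩ := accepts_inv A hq w' b rfl
    obtain ⟨⟨hpt, hpa⟩, _⟩ := firstPred_spec_s12 A hp0t hp0a
    have hrun : A.derivRun (w' ++ [b]) q = A.derivRun w' (A.firstPred q b w') ++ [q] := by
      simp [UNFA.derivRun, UNFA.derivRunRev]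
    rw [hrun]
    exact isRun_snoc A (ih _ hpa) hpt

/-- In the unrolled (graded) automaton, for every state `q ≠ q_I` and every `w ∈ L(q)`,
writing `w = w'·b`, there is a unique `≺`-first `b`-predecessor of `q` accepting `w'`,
and the derivation run `run(w,q)` is an accepting run of `w` ending at `q`. -/
theorem stmt_12 {σ : Type*} [Fintype σ] [LinearOrder σ] [Inhabited σ] (A : UNFA σ)
    (lvl : σ → ℕ) (hlvl0 : lvl A.qI = 0)
    (hlvlstep : ∀ q' b q, A.trans q' b q → lvl q = lvl q' + 1)
    (q : σ) (hq : q ≠ A.qI) (w : List Bool) (hw : A.Accepts w q) :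
    (∀ w' (b : Bool), w = w' ++ [b] →
      ∃! p : σ, A.trans p b q ∧ A.Accepts w' p ∧
        ∀ p' : σ, A.trans p' b q → A.Accepts w' p' → p ≤ p') ∧
    A.IsRun w (A.derivRun w q) q := by
  constructor
  · intro w' b hwb
    subst hwb
    obtain ⟨p0, hp0t, hp0a⟩ := accepts_inv A hw w' b rfl
    obtain ⟨⟨hpt, hpa⟩, hmin⟩ := firstPred_spec_s12 A hp0t hp0a
    refine ⟨A.firstPred q b w', ⟨hpt, hpa, hmin⟩, ?_⟩
    rintro y ⟨hyt, hya, hymin⟩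
    exact le_antisymm (hymin _ hpt hpa) (hmin _ hyt hya)
  · exact isRun_derivRun A w q hw
end
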